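/- Let K be a measurable space and F a separable real normed vector space, and let f ↦ ν_f and f ↦ ν̃_f be two energy-measure assignments on (F, K) (with the defining inequality (b) holding for possibly different equivalent norms on F). Suppose there exist constants 0 < c₁ ≤ c₂ such that c₁·ν_f(B) ≤ ν̃_f(B) ≤ c₂·ν_f(B) for every f ∈ F and every measurable set B. Let ν be a minimal energy-dominant measure for f ↦ ν_f. Then ν is also a minimal energy-dominant measure for f ↦ ν̃_f, and for every N ∈ ℕ and all f₁, …, f_N ∈ F, rank ((dν_{f_i,f_j}/dν)(x))_{i,j≤N} = rank ((dν̃_{f_i,f_j}/dν)(x))_{i,j≤N} for ν-a.e. x ∈ K; consequently the pointwise indices of the two assignments coincide ν-a.e. -/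

import Mathlib

/-!
Comparability `c₁ ν_f ≤ ν̃_f ≤ c₂ ν_f` makes each `ν_f` and `ν̃_f` mutually absolutely
continuous, so both assignments have the same minimal energy-dominant measures. For the
ranks: integrating the quadratic form `c ⬝ᵥ W(x) *ᵥ c` of a density matrix over `B` gives
`ν_{∑ cᵢ fᵢ}(B)`, so comparability of the energy measures becomes a.e. comparability of the
quadratic forms of the two density matrices, first for the countably many rational `c` and
then for all `c` by continuity. Both density matrices are a.e. positive semidefinite, and
comparable positive semidefinite forms have the same kernel, hence the same rank.
-/

open MeasureTheory

/-- The mutual measure value `ν_{f,g}(B) := (ν_{f+g}(B) − ν_f(B) − ν_g(B))/2`. -/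
noncomputable def mutualEM {F K : Type*} [MeasurableSpace K] [Add F]
    (em : F → Measure K) (f g : F) (B : Set K) : ℝ :=
  ((em (f + g) B).toReal - (em f B).toReal - (em g B).toReal) / 2

/-- An energy-measure assignment on `(F, K)` with respect to a given norm function `nrm`:
each `f : F` is assigned a finite measure `ν_f` on `K` such that (a) for every measurable `B`,
`(f, g) ↦ ν_{f,g}(B)` is a (symmetric) bilinear form, and (b)
`(√(ν_f B) − √(ν_g B))² ≤ ν_{f−g}(B) ≤ 2 (nrm (f−g))²` for all measurable `B`. -/
structure EMA (F K : Type*) [MeasurableSpace K] [AddCommGroup F] [Module ℝ F]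
    (nrm : F → ℝ) where
  em : F → Measure K
  finite : ∀ f, IsFiniteMeasure (em f)
  add_left : ∀ (f₁ f₂ g : F) (B : Set K), MeasurableSet B →
    mutualEM em (f₁ + f₂) g B = mutualEM em f₁ g B + mutualEM em f₂ g B
  smul_left : ∀ (c : ℝ) (f g : F) (B : Set K), MeasurableSet B →
    mutualEM em (c • f) g B = c * mutualEM em f g B
  sqrt_diff_le : ∀ (f g : F) (B : Set K), MeasurableSet B →
    (Real.sqrt (em f B).toReal - Real.sqrt (em g B).toReal) ^ 2 ≤ (em (f - g) B).toReal
  le_norm : ∀ (f g : F) (B : Set K), MeasurableSet B →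
    (em (f - g) B).toReal ≤ 2 * nrm (f - g) ^ 2

/-- `ν` is a minimal energy-dominant measure for the assignment `E`. -/
def IsMinED {F K : Type*} [MeasurableSpace K] [AddCommGroup F] [Module ℝ F]
    {nrm : F → ℝ} (E : EMA F K nrm) (ν : Measure K) : Prop :=
  SigmaFinite ν ∧ (∀ f, E.em f ≪ ν) ∧
    ∀ ν' : Measure K, SigmaFinite ν' → (∀ f, E.em f ≪ ν') → ν ≪ ν'

open MeasureTheory Matrix

lemma mutualEM_comm {F K : Type*} [MeasurableSpace K] [AddCommMagma F]
    (em : F → Measure K) (f g : F) (B : Set K) :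
    mutualEM em f g B = mutualEM em g f B := by
  unfold mutualEM; rw [add_comm]; ring

lemma Matrix.PosSemidef.rank_le_of_dotProduct_mulVec_le {n : Type*} [Fintype n]
    {A B : Matrix n n ℝ} (hB : B.PosSemidef) (k : ℝ)
    (h : ∀ v, v ⬝ᵥ B *ᵥ v ≤ k * (v ⬝ᵥ A *ᵥ v)) : B.rank ≤ A.rank := by
  have hker : LinearMap.ker A.mulVecLin ≤ LinearMap.ker B.mulVecLin := by
    intro v hv
    rw [LinearMap.mem_ker, mulVecLin_apply] at hv ⊢
    refine (hB.dotProduct_mulVec_zero_iff v).mp (le_antisymm ?_ ?_)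
    · simpa [hv] using h v
    · simpa using hB.dotProduct_mulVec_nonneg v
  have hA_dim := LinearMap.finrank_range_add_finrank_ker A.mulVecLin
  have hB_dim := LinearMap.finrank_range_add_finrank_ker B.mulVecLin
  have hker_dim := Submodule.finrank_mono hker
  unfold rank
  omega

lemma MeasureTheory.Measure.AbsolutelyContinuous.of_toReal_le_mul {K : Type*}
    [MeasurableSpace K] {μ μ' : Measure K} [IsFiniteMeasure μ'] (k : ℝ)
    (h : ∀ s, MeasurableSet s → (μ' s).toReal ≤ k * (μ s).toReal) : μ' ≪ μ := by
  refine Measure.AbsolutelyContinuous.mk fun s hs hμs => ?_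
  have h' := h s hs
  rw [hμs, ENNReal.toReal_zero, mul_zero] at h'
  exact (ENNReal.toReal_eq_zero_iff _).mp (le_antisymm h' ENNReal.toReal_nonneg)
    |>.resolve_right (measure_ne_top μ' s)

lemma IsMinED.of_absolutelyContinuous {F K : Type*} [MeasurableSpace K] [AddCommGroup F]
    [Module ℝ F] {nrm nrm' : F → ℝ} {E : EMA F K nrm} {E' : EMA F K nrm'} {ν : Measure K}
    (hν : IsMinED E ν) (h : ∀ f, E'.em f ≪ E.em f) (h' : ∀ f, E.em f ≪ E'.em f) :
    IsMinED E' ν :=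
  ⟨hν.1, fun f => (h f).trans (hν.2.1 f),
    fun ν' hσ hdom => hν.2.2 ν' hσ fun f => (h' f).trans (hdom f)⟩

lemma MeasureTheory.ae_forall_of_forall_rat {K ι : Type*} [MeasurableSpace K] [Finite ι]
    {μ : Measure K} {p : K → (ι → ℝ) → Prop} (hp : ∀ x, IsClosed {v | p x v})
    (h : ∀ q : ι → ℚ, ∀ᵐ x ∂μ, p x fun i => q i) : ∀ᵐ x ∂μ, ∀ v, p x v := by
  have hdense : DenseRange (Pi.map fun _ : ι => ((↑) : ℚ → ℝ)) :=
    DenseRange.piMap fun _ => Rat.denseRange_cast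
  filter_upwards [ae_all_iff.mpr h] with x hx v
  exact hdense.induction_on v (hp x) hx

lemma continuous_dotProduct_mulVec {n : Type*} [Fintype n] (A : Matrix n n ℝ) :
    Continuous fun v : n → ℝ => v ⬝ᵥ A *ᵥ v :=
  continuous_id.dotProduct (continuous_const.matrix_mulVec continuous_id)

lemma MeasureTheory.integrable_dotProduct_mulVec {K ι : Type*} [MeasurableSpace K]
    [Fintype ι] {ν : Measure K} {W : ι → ι → K → ℝ} (hWint : ∀ i j, Integrable (W i j) ν)
    (c : ι → ℝ) :
    Integrable (fun x => c ⬝ᵥ (of fun i j => W i j x) *ᵥ c) ν := by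
  simp only [dotProduct, mulVec, of_apply, Finset.mul_sum]
  exact integrable_finsetSum _ fun i _ => integrable_finsetSum _ fun j _ =>
    ((hWint i j).mul_const _).const_mul _

namespace EMA

section Polarization

variable {F K : Type*} [MeasurableSpace K] [AddCommGroup F] [Module ℝ F] {nrm : F → ℝ}
  (E : EMA F K nrm) {B : Set K}

lemma mutualEM_zero_left (hB : MeasurableSet B) (g : F) : mutualEM E.em 0 g B = 0 := by
  simpa using E.smul_left 0 g g B hB

lemma em_zero_toReal (hB : MeasurableSet B) : (E.em 0 B).toReal = 0 := by
  have h := E.mutualEM_zero_left hB 0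
  rw [mutualEM, add_zero] at h
  linarith

lemma em_neg_toReal (hB : MeasurableSet B) (g : F) :
    (E.em (-g) B).toReal = (E.em g B).toReal := by
  have le_neg (h : F) : (E.em h B).toReal ≤ (E.em (-h) B).toReal := by
    simpa [E.em_zero_toReal hB] using E.sqrt_diff_le 0 h B hB
  exact le_antisymm (by simpa using le_neg (-g)) (le_neg g)

lemma mutualEM_self (hB : MeasurableSet B) (g : F) :
    mutualEM E.em g g B = (E.em g B).toReal := by
  have h := E.smul_left (-1) g g B hB
  rw [neg_one_smul, neg_one_mul, mutualEM, neg_add_cancel, E.em_zero_toReal hB,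
    E.em_neg_toReal hB] at h
  linarith

lemma mutualEM_sum_left (hB : MeasurableSet B) {ι : Type*} (s : Finset ι) (g : ι → F)
    (h : F) :
    mutualEM E.em (∑ i ∈ s, g i) h B = ∑ i ∈ s, mutualEM E.em (g i) h B := by
  classical
  induction s using Finset.induction_on with
  | empty => simpa using E.mutualEM_zero_left hB h
  | insert _ _ hx ih =>
    rw [Finset.sum_insert hx, E.add_left _ _ _ _ hB, ih, Finset.sum_insert hx]

lemma em_sum_smul_toReal (hB : MeasurableSet B) {ι : Type*} [Fintype ι] (c : ι → ℝ)
    (f : ι → F) :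
    (E.em (∑ i, c i • f i) B).toReal =
      c ⬝ᵥ (of fun i j => mutualEM E.em (f i) (f j) B) *ᵥ c := by
  rw [← E.mutualEM_self hB, E.mutualEM_sum_left hB, dotProduct]
  refine Finset.sum_congr rfl fun i _ => ?_
  rw [E.smul_left _ _ _ _ hB, mutualEM_comm, E.mutualEM_sum_left hB, mulVec, dotProduct,
    Finset.mul_sum, Finset.mul_sum]
  refine Finset.sum_congr rfl fun j _ => ?_
  rw [E.smul_left _ _ _ _ hB, mutualEM_comm, of_apply]
  ring

end Polarization

section EnergyDensity

variable {F K ι : Type*} [MeasurableSpace K] [AddCommGroup F] [Module ℝ F] [Fintype ι]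
  {nrm : F → ℝ} {E : EMA F K nrm} {ν : Measure K} {f : ι → F} {W : ι → ι → K → ℝ}
  (hWint : ∀ i j, Integrable (W i j) ν)
  (hW : ∀ i j B, MeasurableSet B → mutualEM E.em (f i) (f j) B = ∫ x in B, W i j x ∂ν)
include hWint hW

lemma setIntegral_dotProduct_mulVec (c : ι → ℝ) {B : Set K} (hB : MeasurableSet B) :
    ∫ x in B, c ⬝ᵥ (of fun i j => W i j x) *ᵥ c ∂ν = (E.em (∑ i, c i • f i) B).toReal := by
  simp only [E.em_sum_smul_toReal hB, dotProduct, mulVec, of_apply, hW _ _ B hB]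
  rw [integral_finsetSum _ fun i _ => ?_]
  · refine Finset.sum_congr rfl fun i _ => ?_
    rw [integral_const_mul, integral_finsetSum _ fun j _ => ?_]
    · simp_rw [integral_mul_const]
    · exact ((hWint i j).mul_const _).integrableOn
  · exact (integrable_finsetSum _ fun j _ => (hWint i j).mul_const _).const_mul _
      |>.integrableOn

lemma ae_isHermitian : ∀ᵐ x ∂ν, (of fun i j => W i j x).IsHermitian := by
  have hsymm (i j : ι) : W j i =ᵐ[ν] W i j :=
    Integrable.ae_eq_of_forall_setIntegral_eq _ _ (hWint j i) (hWint i j) fun B hB _ => by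
      rw [← hW _ _ _ hB, ← hW _ _ _ hB, mutualEM_comm]
  filter_upwards [ae_all_iff.mpr fun i => ae_all_iff.mpr (hsymm i)] with x hx
  ext i j
  exact hx i j

lemma ae_posSemidef : ∀ᵐ x ∂ν, (of fun i j => W i j x).PosSemidef := by
  have hnonneg : ∀ᵐ x ∂ν, ∀ v, 0 ≤ v ⬝ᵥ (of fun i j => W i j x) *ᵥ v := by
    refine ae_forall_of_forall_rat (fun x => isClosed_le continuous_const
      (continuous_dotProduct_mulVec _)) fun q => ?_
    refine ae_nonneg_of_forall_setIntegral_nonneg (integrable_dotProduct_mulVec hWint _)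
      fun B hB _ => ?_
    rw [setIntegral_dotProduct_mulVec hWint hW _ hB]
    exact ENNReal.toReal_nonneg
  filter_upwards [ae_isHermitian hWint hW, hnonneg] with x hx hx'
  exact .of_dotProduct_mulVec_nonneg hx hx'

end EnergyDensity

section Comparison

variable {F K ι : Type*} [MeasurableSpace K] [AddCommGroup F] [Module ℝ F] [Fintype ι]
  {nrm nrm' : F → ℝ} {E : EMA F K nrm} {E' : EMA F K nrm'} {ν : Measure K} {f : ι → F}
  {W W' : ι → ι → K → ℝ}
  (hWint : ∀ i j, Integrable (W i j) ν) (hW'int : ∀ i j, Integrable (W' i j) ν)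
  (hW : ∀ i j B, MeasurableSet B → mutualEM E.em (f i) (f j) B = ∫ x in B, W i j x ∂ν)
  (hW' : ∀ i j B, MeasurableSet B → mutualEM E'.em (f i) (f j) B = ∫ x in B, W' i j x ∂ν)
include hWint hW'int hW hW'

lemma ae_dotProduct_mulVec_le_mul (k : ℝ)
    (hle : ∀ g B, MeasurableSet B → (E'.em g B).toReal ≤ k * (E.em g B).toReal) :
    ∀ᵐ x ∂ν, ∀ v,
      v ⬝ᵥ (of fun i j => W' i j x) *ᵥ v ≤ k * (v ⬝ᵥ (of fun i j => W i j x) *ᵥ v) := by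
  refine ae_forall_of_forall_rat (fun x => isClosed_le (continuous_dotProduct_mulVec _)
    (continuous_const.mul (continuous_dotProduct_mulVec _))) fun q => ?_
  refine ae_le_of_forall_setIntegral_le (integrable_dotProduct_mulVec hW'int _)
    ((integrable_dotProduct_mulVec hWint _).const_mul k) fun B hB _ => ?_
  rw [integral_const_mul, setIntegral_dotProduct_mulVec hWint hW _ hB,
    setIntegral_dotProduct_mulVec hW'int hW' _ hB]
  exact hle _ B hB

lemma ae_rank_eq_of_toReal_le_mul (k k' : ℝ)
    (hle : ∀ g B, MeasurableSet B → (E'.em g B).toReal ≤ k * (E.em g B).toReal)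
    (hle' : ∀ g B, MeasurableSet B → (E.em g B).toReal ≤ k' * (E'.em g B).toReal) :
    ∀ᵐ x ∂ν, (of fun i j => W i j x).rank = (of fun i j => W' i j x).rank := by
  filter_upwards [ae_posSemidef hWint hW, ae_posSemidef hW'int hW',
    ae_dotProduct_mulVec_le_mul hWint hW'int hW hW' k hle,
    ae_dotProduct_mulVec_le_mul hW'int hWint hW' hW k' hle'] with x hA hA' h h'
  exact le_antisymm (hA.rank_le_of_dotProduct_mulVec_le k' h')
    (hA'.rank_le_of_dotProduct_mulVec_le k h)

end Comparison

end EMA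

theorem stmt15_general {F K : Type*} [MeasurableSpace K] [NormedAddCommGroup F] [NormedSpace ℝ F]
    (E : EMA F K fun f => ‖f‖)
    (nrm' : F → ℝ)
    (E' : EMA F K nrm')
    (c₁ c₂ : ℝ) (hc₁ : 0 < c₁)
    (hcomp : ∀ (f : F) (B : Set K), MeasurableSet B →
      c₁ * (E.em f B).toReal ≤ (E'.em f B).toReal ∧
        (E'.em f B).toReal ≤ c₂ * (E.em f B).toReal)
    (ν : Measure K) (hν : IsMinED E ν) :
    IsMinED E' ν ∧
    (∀ (N : ℕ) (f : Fin N → F) (W W' : Fin N → Fin N → K → ℝ),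
      (∀ i j, Integrable (W i j) ν) → (∀ i j, Integrable (W' i j) ν) →
      (∀ (i j : Fin N) (B : Set K), MeasurableSet B →
        mutualEM E.em (f i) (f j) B = ∫ x in B, W i j x ∂ν) →
      (∀ (i j : Fin N) (B : Set K), MeasurableSet B →
        mutualEM E'.em (f i) (f j) B = ∫ x in B, W' i j x ∂ν) →
      ∀ᵐ x ∂ν, (Matrix.of fun i j : Fin N => W i j x).rank
        = (Matrix.of fun i j : Fin N => W' i j x).rank) ∧
    (∀ f : ℕ → F, Dense (Submodule.span ℝ (Set.range f) : Set F) →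
      ∀ Z Z' : ℕ → ℕ → K → ℝ,
      (∀ i j, Integrable (Z i j) ν) → (∀ i j, Integrable (Z' i j) ν) →
      (∀ (i j : ℕ) (B : Set K), MeasurableSet B →
        mutualEM E.em (f i) (f j) B = ∫ x in B, Z i j x ∂ν) →
      (∀ (i j : ℕ) (B : Set K), MeasurableSet B →
        mutualEM E'.em (f i) (f j) B = ∫ x in B, Z' i j x ∂ν) →
      ∀ᵐ x ∂ν, (⨆ M : ℕ, ((Matrix.of fun i j : Fin M => Z i j x).rank : ℕ∞))
        = ⨆ M : ℕ, ((Matrix.of fun i j : Fin M => Z' i j x).rank : ℕ∞)) := by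
  have hupper (g : F) (B : Set K) (hB : MeasurableSet B) :
      (E'.em g B).toReal ≤ c₂ * (E.em g B).toReal := (hcomp g B hB).2
  have hlower (g : F) (B : Set K) (hB : MeasurableSet B) :
      (E.em g B).toReal ≤ c₁⁻¹ * (E'.em g B).toReal :=
    (le_inv_mul_iff₀ hc₁).2 (hcomp g B hB).1
  refine ⟨hν.of_absolutelyContinuous
    (fun g => haveI := E'.finite g; .of_toReal_le_mul c₂ (hupper g))
    (fun g => haveI := E.finite g; .of_toReal_le_mul c₁⁻¹ (hlower g)),
    fun N f W W' hWint hW'int hW hW' =>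
      EMA.ae_rank_eq_of_toReal_le_mul hWint hW'int hW hW' c₂ c₁⁻¹ hupper hlower, ?_⟩
  intro f _ Z Z' hZint hZ'int hZ hZ'
  have hrankM (M : ℕ) := EMA.ae_rank_eq_of_toReal_le_mul (f := fun i : Fin M => f i)
    (fun i j => hZint i j) (fun i j => hZ'int i j) (fun i j => hZ i j) (fun i j => hZ' i j)
    c₂ c₁⁻¹ hupper hlower
  filter_upwards [ae_all_iff.mpr hrankM] with x hx
  simp_rw [hx]

/-- Proposition 2.11 of the paper (stability of the pointwise index): if two energy-measure
assignments (with equivalent norms) have comparable energy measures,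
`c₁ ν_f ≤ ν̃_f ≤ c₂ ν_f`, then a minimal energy-dominant measure `ν` of the first is also one
for the second, the ranks of the density matrices of any finite family coincide ν-a.e., and
the pointwise indices coincide ν-a.e. -/
theorem stmt15 {F K : Type*} [MeasurableSpace K] [NormedAddCommGroup F]
    [NormedSpace ℝ F] [TopologicalSpace.SeparableSpace F]
    (E : EMA F K fun f => ‖f‖)
    (nrm' : F → ℝ)
    (hequiv : ∃ cl cu : ℝ, 0 < cl ∧ ∀ f : F, cl * ‖f‖ ≤ nrm' f ∧ nrm' f ≤ cu * ‖f‖)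
    (E' : EMA F K nrm')
    (c₁ c₂ : ℝ) (hc₁ : 0 < c₁) (hc₁₂ : c₁ ≤ c₂)
    (hcomp : ∀ (f : F) (B : Set K), MeasurableSet B →
      c₁ * (E.em f B).toReal ≤ (E'.em f B).toReal ∧
        (E'.em f B).toReal ≤ c₂ * (E.em f B).toReal)
    (ν : Measure K) (hν : IsMinED E ν) :
    IsMinED E' ν ∧
    (∀ (N : ℕ) (f : Fin N → F) (W W' : Fin N → Fin N → K → ℝ),
      (∀ i j, Integrable (W i j) ν) → (∀ i j, Integrable (W' i j) ν) →
      (∀ (i j : Fin N) (B : Set K), MeasurableSet B →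
        mutualEM E.em (f i) (f j) B = ∫ x in B, W i j x ∂ν) →
      (∀ (i j : Fin N) (B : Set K), MeasurableSet B →
        mutualEM E'.em (f i) (f j) B = ∫ x in B, W' i j x ∂ν) →
      ∀ᵐ x ∂ν, (Matrix.of fun i j : Fin N => W i j x).rank
        = (Matrix.of fun i j : Fin N => W' i j x).rank) ∧
    (∀ f : ℕ → F, Dense (Submodule.span ℝ (Set.range f) : Set F) →
      ∀ Z Z' : ℕ → ℕ → K → ℝ,
      (∀ i j, Integrable (Z i j) ν) → (∀ i j, Integrable (Z' i j) ν) →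
      (∀ (i j : ℕ) (B : Set K), MeasurableSet B →
        mutualEM E.em (f i) (f j) B = ∫ x in B, Z i j x ∂ν) →
      (∀ (i j : ℕ) (B : Set K), MeasurableSet B →
        mutualEM E'.em (f i) (f j) B = ∫ x in B, Z' i j x ∂ν) →
      ∀ᵐ x ∂ν, (⨆ M : ℕ, ((Matrix.of fun i j : Fin M => Z i j x).rank : ℕ∞))
        = ⨆ M : ℕ, ((Matrix.of fun i j : Fin M => Z' i j x).rank : ℕ∞)) :=
  stmt15_general E nrm' E' c₁ c₂ hc₁ hcomp ν hν
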